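/- Let u ∈ ℝ^N satisfy ‖u‖_∞ ≤ π/2. Then the matrix D^{1/2} C D^{−1/2} + G(u)D⁻² is symmetric positive definite. -/

import Mathlib

open Real Matrix

noncomputable section

/-- Mesh size `h = 1/(N+1)`. -/
def hmesh (N : ℕ) : ℝ := 1 / (N + 1)

/-- Grid points `x_i = i·h`, `i = 1,…,N` (here `i : Fin N` corresponds to `i+1`). -/
def gridx (N : ℕ) (i : Fin N) : ℝ := ((i : ℕ) + 1) * hmesh N

/-- `A = (1/h²)·tridiag(−1,2,−1)`. -/
def matA (N : ℕ) : Matrix (Fin N) (Fin N) ℝ := fun i j =>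
  (1 / (hmesh N) ^ 2) *
    (if (i : ℕ) = (j : ℕ) then 2
     else if (i : ℕ) + 1 = (j : ℕ) ∨ (j : ℕ) + 1 = (i : ℕ) then -1 else 0)

/-- `B = (1/(2h))·tridiag(−1,0,1)`. -/
def matB (N : ℕ) : Matrix (Fin N) (Fin N) ℝ := fun i j =>
  (1 / (2 * hmesh N)) *
    (if (i : ℕ) + 1 = (j : ℕ) then 1
     else if (j : ℕ) + 1 = (i : ℕ) then -1 else 0)

/-- `D = diag(x_1,…,x_N)`. -/
def matD (N : ℕ) : Matrix (Fin N) (Fin N) ℝ := Matrix.diagonal (gridx N)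

/-- `D^β = diag(x_1^β,…,x_N^β)` (real powers). -/
def matDpow (N : ℕ) (β : ℝ) : Matrix (Fin N) (Fin N) ℝ :=
  Matrix.diagonal (fun i => gridx N i ^ β)

/-- `C = A − D⁻¹B`. -/
def matC (N : ℕ) : Matrix (Fin N) (Fin N) ℝ :=
  matA N - Matrix.diagonal (fun i => (gridx N i)⁻¹) * matB N

/-- `g(y) = sin(2y)/(2y)` for `y ≠ 0`, `g(0) = 1`. -/
def gfun (y : ℝ) : ℝ := if y = 0 then 1 else Real.sin (2 * y) / (2 * y)

/-- `G(u) = diag(g(u_1),…,g(u_N))`. -/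
def matG {N : ℕ} (u : Fin N → ℝ) : Matrix (Fin N) (Fin N) ℝ :=
  Matrix.diagonal (fun i => gfun (u i))

/-- The matrix `I + Δt(C + G(v)D⁻²)` of the semi-implicit Euler scheme. -/
def stepMat (N : ℕ) (Δt : ℝ) (v : Fin N → ℝ) : Matrix (Fin N) (Fin N) ℝ :=
  1 + Δt • (matC N + matG v * matDpow N (-2))

/-- Operator norm of a matrix induced by the maximum norm on `ℝ^N`
(the Pi norm on `Fin N → ℝ` is the sup norm). -/
def opNormInf {N : ℕ} (M : Matrix (Fin N) (Fin N) ℝ) : ℝ :=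
  ‖(LinearMap.toContinuousLinearMap (Matrix.mulVecLin M) :
      (Fin N → ℝ) →L[ℝ] (Fin N → ℝ))‖

end

/-!
Multiplying by `D` turns `C` into a divergence-form operator: `D C = Eᵀ W E`, where `E` is the
`(N+1) × N` difference matrix and `W` the diagonal of the midpoint values `x_{k+1/2} / h²`.
Hence `D^{1/2} C D^{-1/2} = (E D^{-1/2})ᵀ W (E D^{-1/2})`, which is positive definite because
`E` is injective. Adding `G(u) D⁻²` keeps it so: its diagonal entries `sinc (2 uᵢ) / xᵢ²` are
nonnegative for `|uᵢ| ≤ π/2`.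
-/

section DiffMatrix

variable (R : Type*)

/-- Row `k` of `diffMatrix R n` maps `v` to `v k - v (k - 1)`, with `v (-1) = v n = 0`. -/
def diffMatrix [Ring R] (n : ℕ) : Matrix (Fin (n + 1)) (Fin n) R := fun k i =>
  if (k : ℕ) = i then 1 else if (k : ℕ) = i + 1 then -1 else 0

variable {R} [CommRing R]

theorem diffMatrix_submatrix_castSucc_det (n : ℕ) :
    ((diffMatrix R n).submatrix Fin.castSucc id).det = 1 := by
  rw [det_of_isLowerTriangular]
  · simp [diffMatrix]
  · intro i j hji
    have : (i : ℕ) < j := hji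
    simp only [diffMatrix, submatrix_apply, Fin.val_castSucc, id]
    rw [if_neg (by omega), if_neg (by omega)]

theorem diffMatrix_mulVec_injective (n : ℕ) :
    Function.Injective (diffMatrix R n).mulVec := by
  intro v w hvw
  have hunit : IsUnit ((diffMatrix R n).submatrix Fin.castSucc id) := by
    rw [isUnit_iff_isUnit_det, diffMatrix_submatrix_castSucc_det]
    exact isUnit_one
  refine mulVec_injective_of_isUnit hunit ?_
  ext i
  simpa [mulVec, dotProduct] using congrFun hvw i.castSucc

theorem diffMatrix_transpose_mul_diagonal_mul_apply (n : ℕ) (w : Fin (n + 1) → R)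
    (i j : Fin n) :
    ((diffMatrix R n)ᵀ * diagonal w * diffMatrix R n) i j =
      w i.castSucc * diffMatrix R n i.castSucc j - w i.succ * diffMatrix R n i.succ j := by
  rw [mul_apply, Fintype.sum_eq_add i.castSucc i.succ Fin.castSucc_lt_succ.ne]
  · simp only [mul_diagonal, transpose_apply, diffMatrix, Fin.val_castSucc, Fin.val_succ]
    split_ifs <;> first | omega | ring
  · rintro k ⟨hk1, hk2⟩
    have h1 : (k : ℕ) ≠ i := fun h => hk1 (Fin.ext h)
    have h2 : (k : ℕ) ≠ i + 1 := fun h => hk2 (Fin.ext h)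
    simp [diffMatrix, mul_diagonal, h1, h2]

end DiffMatrix

theorem hmesh_pos (N : ℕ) : 0 < hmesh N := by
  unfold hmesh; positivity

theorem gridx_pos (N : ℕ) (i : Fin N) : 0 < gridx N i :=
  mul_pos (by positivity) (hmesh_pos N)

/-- `x_{k+1/2} / h²` in the paper's indexing, `x_{k+1/2} = (k + 1/2) h` being the midpoint of
`x_k` and `x_{k+1}`. -/
noncomputable def midWeight (N : ℕ) (k : Fin (N + 1)) : ℝ :=
  ((k : ℝ) + 1 / 2) * hmesh N / hmesh N ^ 2

theorem midWeight_pos (N : ℕ) (k : Fin (N + 1)) : 0 < midWeight N k := by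
  have := hmesh_pos N
  unfold midWeight
  positivity

theorem matD_mul_matC_apply (N : ℕ) (i j : Fin N) :
    (matD N * matC N) i j = gridx N i * matA N i j - matB N i j := by
  have hx : gridx N i * (gridx N i)⁻¹ = 1 := mul_inv_cancel₀ (gridx_pos N i).ne'
  simp only [matD, matC, Matrix.sub_apply, diagonal_mul]
  rw [mul_sub, ← mul_assoc, hx, one_mul]

theorem matD_mul_matC (N : ℕ) :
    matD N * matC N = (diffMatrix ℝ N)ᵀ * diagonal (midWeight N) * diffMatrix ℝ N := by
  ext i j
  have hh : hmesh N ≠ 0 := (hmesh_pos N).ne'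
  rw [matD_mul_matC_apply, diffMatrix_transpose_mul_diagonal_mul_apply]
  simp only [matA, matB, diffMatrix, midWeight, gridx, Fin.val_castSucc, Fin.val_succ]
  split_ifs <;> first | omega | (field_simp; push_cast; ring)

theorem matDpow_add (N : ℕ) (a b : ℝ) : matDpow N (a + b) = matDpow N a * matDpow N b := by
  simp only [matDpow, diagonal_mul_diagonal, rpow_add (gridx_pos N _)]

theorem matDpow_zero (N : ℕ) : matDpow N 0 = 1 := by
  simp [matDpow]

theorem matDpow_one (N : ℕ) : matDpow N 1 = matD N := by
  simp [matDpow, matD]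

theorem transpose_matDpow (N : ℕ) (β : ℝ) : (matDpow N β)ᵀ = matDpow N β :=
  diagonal_transpose _

theorem isUnit_matDpow (N : ℕ) (β : ℝ) : IsUnit (matDpow N β) := by
  rw [isUnit_iff_isUnit_det]
  exact isUnit_det_of_right_inverse (B := matDpow N (-β))
    (by rw [← matDpow_add, add_neg_cancel, matDpow_zero])

theorem matDpow_half_mul_matC_mul_matDpow_neg_half (N : ℕ) :
    matDpow N (1 / 2) * matC N * matDpow N (-(1 / 2)) =
      (diffMatrix ℝ N * matDpow N (-(1 / 2)))ᴴ * diagonal (midWeight N) *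
        (diffMatrix ℝ N * matDpow N (-(1 / 2))) := by
  have hhalf : matDpow N (1 / 2) = matDpow N (-(1 / 2)) * matD N := by
    rw [← matDpow_one, ← matDpow_add]
    norm_num
  rw [hhalf, Matrix.mul_assoc (matDpow N _), matD_mul_matC, conjTranspose_eq_transpose_of_trivial,
    transpose_mul, transpose_matDpow]
  simp only [Matrix.mul_assoc]

theorem posDef_matDpow_half_mul_matC_mul_matDpow_neg_half (N : ℕ) :
    (matDpow N (1 / 2) * matC N * matDpow N (-(1 / 2))).PosDef := by
  rw [matDpow_half_mul_matC_mul_matDpow_neg_half]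
  refine (PosDef.diagonal (midWeight_pos N)).conjTranspose_mul_mul_same ?_
  have hcomp : (diffMatrix ℝ N * matDpow N (-(1 / 2))).mulVec =
      (diffMatrix ℝ N).mulVec ∘ (matDpow N (-(1 / 2))).mulVec := by
    funext v
    exact (mulVec_mulVec _ _ _).symm
  rw [hcomp]
  exact (diffMatrix_mulVec_injective N).comp (mulVec_injective_of_isUnit (isUnit_matDpow N _))

theorem sinc_nonneg_of_abs_le_pi {x : ℝ} (hx : |x| ≤ π) : 0 ≤ sinc x := by
  have habs : sinc x = sinc |x| := by
    rcases abs_choice x with h | h <;> rw [h]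
    rw [sinc_neg]
  rw [habs]
  rcases (abs_nonneg x).eq_or_lt with h | h
  · rw [← h, sinc_zero]
    exact zero_le_one
  · rw [sinc_of_ne_zero h.ne']
    exact div_nonneg (sin_nonneg_of_nonneg_of_le_pi h.le hx) h.le

theorem gfun_eq_sinc (y : ℝ) : gfun y = sinc (2 * y) := by
  simp [gfun, sinc]

theorem gfun_nonneg {y : ℝ} (hy : |y| ≤ π / 2) : 0 ≤ gfun y := by
  rw [gfun_eq_sinc]
  refine sinc_nonneg_of_abs_le_pi ?_
  rw [abs_mul, abs_two]
  linarith

theorem posSemidef_matG_mul_matDpow {N : ℕ} {u : Fin N → ℝ} (hu : ‖u‖ ≤ π / 2) (β : ℝ) :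
    (matG u * matDpow N β).PosSemidef := by
  rw [matG, matDpow, diagonal_mul_diagonal, posSemidef_diagonal_iff]
  intro i
  have hui : |u i| ≤ π / 2 := (Real.norm_eq_abs _ ▸ norm_le_pi_norm u i).trans hu
  exact mul_nonneg (gfun_nonneg hui) (rpow_nonneg (gridx_pos N i).le _)

theorem stmt8_general {N : ℕ} (u : Fin N → ℝ) (hu : ‖u‖ ≤ π / 2) :
    (matDpow N (1 / 2) * matC N * matDpow N (-(1 / 2)) + matG u * matDpow N (-2)).PosDef :=
  (posDef_matDpow_half_mul_matC_mul_matDpow_neg_half N).add_posSemidef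
    (posSemidef_matG_mul_matDpow hu (-2))

/-- For `‖u‖_∞ ≤ π/2`, the matrix `D^{1/2} C D^{−1/2} + G(u)D⁻²` is symmetric
positive definite. -/
theorem stmt8 {N : ℕ} (hN : 1 ≤ N) (u : Fin N → ℝ) (hu : ‖u‖ ≤ π / 2) :
    (matDpow N (1 / 2) * matC N * matDpow N (-(1 / 2)) + matG u * matDpow N (-2)).PosDef :=
  stmt8_general u hu
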